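/- arXiv:math/0407114 — 5 statements merged into one kernel-verified Lean document; each statement's English description precedes it below -/
import Mathlib

section
/- Let g : S¹ → S¹ be a C² local diffeomorphism and I ⊂ S¹ an interval such that g maps I, g(I), ..., g^{k-1}(I) diffeomorphically with ℓ(g^j(I)) ≥ σ ℓ(g^{j-1}(I)) for all 1 ≤ j ≤ k and some σ > 1. Then for all x, y ∈ I, |log((g^k)'(x) / (g^k)'(y))| ≤ C₀, where C₀ = sup|g''/g'| · 1/(1 − σ^{-1}). -/
/-!
Write `I = [u, v]` and `Iⱼ = g^[j] '' I`. By the chain rule,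
`log ((g^k)'(x) / (g^k)'(y))` is the sum over `j < k` of `log g'(g^j x) - log g'(g^j y)`,
and by the mean value theorem applied to `log ∘ g'` each term is at most
`K · |g^j x - g^j y| ≤ K · ℓ(Iⱼ)`. Since the lengths grow by a factor `σ` at each step and
`ℓ(I_k) ≤ 1`, we get `ℓ(Iⱼ) ≤ σ^{-(k-j)}`, and the geometric series bounds the sum by
`K / (1 - σ⁻¹)`.
-/

open MeasureTheory Set

theorem deriv_iterate_eq_prod {𝕜 : Type*} [NontriviallyNormedField 𝕜] {f : 𝕜 → 𝕜}
    (hf : Differentiable 𝕜 f) (n : ℕ) (x : 𝕜) :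
    deriv f^[n] x = ∏ j ∈ Finset.range n, deriv f (f^[j] x) := by
  induction n with
  | zero => simp
  | succ n ih =>
    rw [Function.iterate_succ', Finset.prod_range_succ, ← ih,
      deriv_comp x (hf _) ((hf.iterate n) x), mul_comm]

theorem abs_log_sub_log_le_of_abs_deriv_div_le {f : ℝ → ℝ} (hf : Differentiable ℝ f)
    (hf0 : ∀ x, f x ≠ 0) {K : ℝ} (hK : ∀ x, |deriv f x / f x| ≤ K) (a b : ℝ) :
    |Real.log (f a) - Real.log (f b)| ≤ K * |a - b| := by
  have hlog : ∀ z, HasDerivAt (fun t => Real.log (f t)) (deriv f z / f z) z :=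
    fun z => (hf z).hasDerivAt.log (hf0 z)
  simpa only [Real.norm_eq_abs] using
    (convex_univ : Convex ℝ univ).norm_image_sub_le_of_norm_hasDerivWithin_le
      (fun z _ => (hlog z).hasDerivWithinAt) (fun z _ => hK z) (mem_univ b) (mem_univ a)

theorem abs_log_prod_div_prod_le {ι : Type*} (s : Finset ι) {f : ℝ → ℝ}
    (hf : Differentiable ℝ f) (hf0 : ∀ x, f x ≠ 0) {K : ℝ}
    (hK : ∀ x, |deriv f x / f x| ≤ K) (a b : ι → ℝ) :
    |Real.log ((∏ i ∈ s, f (a i)) / ∏ i ∈ s, f (b i))| ≤ K * ∑ i ∈ s, |a i - b i| := by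
  rw [Real.log_div (Finset.prod_ne_zero_iff.mpr fun i _ => hf0 _)
      (Finset.prod_ne_zero_iff.mpr fun i _ => hf0 _),
    Real.log_prod fun i _ => hf0 _, Real.log_prod fun i _ => hf0 _,
    ← Finset.sum_sub_distrib, Finset.mul_sum]
  exact (Finset.abs_sum_le_sum_abs _ _).trans <| Finset.sum_le_sum fun i _ =>
    abs_log_sub_log_le_of_abs_deriv_div_le hf hf0 hK (a i) (b i)

theorem IsPreconnected.ofReal_abs_sub_le_volume {S : Set ℝ} (hS : IsPreconnected S)
    {a b : ℝ} (ha : a ∈ S) (hb : b ∈ S) : ENNReal.ofReal |a - b| ≤ volume S := by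
  rw [abs_sub_comm, ← Real.volume_interval]
  exact measure_mono (hS.ordConnected.uIcc_subset ha hb)

theorem ENNReal.le_ofReal_inv_pow_of_mul_le {a : ℕ → ENNReal} {σ : ℝ} (hσ : 0 < σ)
    {k : ℕ} (hgrow : ∀ j < k, ENNReal.ofReal σ * a j ≤ a (j + 1)) (hk : a k ≤ 1)
    {j : ℕ} (hj : j ≤ k) :
    a j ≤ ENNReal.ofReal (σ⁻¹ ^ (k - j)) := by
  induction hj using Nat.decreasingInduction with
  | self => simpa using hk
  | of_succ j hj ih =>
    have hσσ : ENNReal.ofReal σ⁻¹ * ENNReal.ofReal σ = 1 := by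
      rw [← ENNReal.ofReal_mul (inv_nonneg.mpr hσ.le), inv_mul_cancel₀ hσ.ne',
        ENNReal.ofReal_one]
    calc a j = ENNReal.ofReal σ⁻¹ * (ENNReal.ofReal σ * a j) := by
          rw [← mul_assoc, hσσ, one_mul]
      _ ≤ ENNReal.ofReal σ⁻¹ * ENNReal.ofReal (σ⁻¹ ^ (k - (j + 1))) := by
        gcongr; exact (hgrow j hj).trans ih
      _ = ENNReal.ofReal (σ⁻¹ ^ (k - j)) := by
        rw [← ENNReal.ofReal_mul (inv_nonneg.mpr hσ.le), ← pow_succ', Nat.sub_add_eq,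
          Nat.sub_add_cancel (Nat.sub_pos_of_lt hj)]

theorem sum_range_pow_sub_le {r : ℝ} (h0 : 0 ≤ r) (h1 : r < 1) (k : ℕ) :
    ∑ j ∈ Finset.range k, r ^ (k - j) ≤ 1 / (1 - r) :=
  calc ∑ j ∈ Finset.range k, r ^ (k - j)
      ≤ ∑ j ∈ Finset.range k, r ^ (k - 1 - j) :=
        Finset.sum_le_sum fun j _ => pow_le_pow_of_le_one h0 h1.le (by omega)
    _ = ∑ i ∈ Finset.Ico 0 k, r ^ i := by
        rw [Finset.sum_range_reflect, Finset.range_eq_Ico]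
    _ ≤ 1 / (1 - r) := (geom_sum_Ico_le_of_lt_one h0 h1).trans_eq (by rw [pow_zero])

theorem stmt0_general (g : ℝ → ℝ) (hg : ContDiff ℝ 2 g)
    (hder : ∀ x, deriv g x ≠ 0)
    (u v : ℝ) (k : ℕ) (σ K : ℝ) (hσ : 1 < σ) (hK : 0 ≤ K)
    (hKbdd : ∀ x, |deriv (deriv g) x / deriv g x| ≤ K)
    (hgrow : ∀ j, 1 ≤ j → j ≤ k →
      ENNReal.ofReal σ * volume (g^[j-1] '' Set.Icc u v)
        ≤ volume (g^[j] '' Set.Icc u v))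
    (hlen : ∀ j ≤ k, volume (g^[j] '' Set.Icc u v) ≤ 1)
    (x y : ℝ) (hx : x ∈ Set.Icc u v) (hy : y ∈ Set.Icc u v) :
    |Real.log (deriv (g^[k]) x / deriv (g^[k]) y)| ≤ K * (1 / (1 - σ⁻¹)) := by
  have hσ0 : 0 < σ := one_pos.trans hσ
  have hg1 : Differentiable ℝ g := hg.differentiable (by norm_num)
  have hg2 : Differentiable ℝ (deriv g) := hg.differentiable_deriv_two
  have hvol : ∀ j ≤ k, volume (g^[j] '' Icc u v) ≤ ENNReal.ofReal (σ⁻¹ ^ (k - j)) :=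
    fun j hj => ENNReal.le_ofReal_inv_pow_of_mul_le (a := fun j => volume (g^[j] '' Icc u v)) hσ0
      (fun i _ => by simpa only [Nat.add_sub_cancel] using hgrow (i + 1) (by omega) (by omega))
      (hlen k le_rfl) hj
  have hdist : ∀ j ≤ k, |g^[j] x - g^[j] y| ≤ σ⁻¹ ^ (k - j) := by
    intro j hj
    have hconn : IsPreconnected (g^[j] '' Icc u v) :=
      isPreconnected_Icc.image _ (hg1.iterate j).continuous.continuousOn
    refine (ENNReal.ofReal_le_ofReal_iff (by positivity)).mp ?_
    exact (hconn.ofReal_abs_sub_le_volume (mem_image_of_mem _ hx) (mem_image_of_mem _ hy)).trans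
      (hvol j hj)
  rw [deriv_iterate_eq_prod hg1, deriv_iterate_eq_prod hg1]
  calc _ ≤ K * ∑ j ∈ Finset.range k, |g^[j] x - g^[j] y| :=
        abs_log_prod_div_prod_le _ hg2 hder hKbdd _ _
    _ ≤ K * ∑ j ∈ Finset.range k, σ⁻¹ ^ (k - j) := by
        gcongr with j hj
        exact hdist j (Finset.mem_range.mp hj).le
    _ ≤ K * (1 / (1 - σ⁻¹)) := by
        gcongr
        exact sum_range_pow_sub_le (by positivity) (inv_lt_one_of_one_lt₀ hσ) k

/-- Bounded distortion for iterates of a C² local diffeomorphism along an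
interval whose images grow exponentially (total length of the circle is 1,
so all image intervals have length at most 1). `K` is `sup |g''/g'|`. -/
theorem stmt0 (g : ℝ → ℝ) (hg : ContDiff ℝ 2 g)
    (hder : ∀ x, deriv g x ≠ 0)
    (u v : ℝ) (huv : u ≤ v) (k : ℕ) (σ K : ℝ) (hσ : 1 < σ) (hK : 0 ≤ K)
    (hKbdd : ∀ x, |deriv (deriv g) x / deriv g x| ≤ K)
    (hdiffeo : ∀ j < k, Set.InjOn g (g^[j] '' Set.Icc u v))
    (hgrow : ∀ j, 1 ≤ j → j ≤ k →
      ENNReal.ofReal σ * volume (g^[j-1] '' Set.Icc u v)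
        ≤ volume (g^[j] '' Set.Icc u v))
    (hlen : ∀ j ≤ k, volume (g^[j] '' Set.Icc u v) ≤ 1)
    (x y : ℝ) (hx : x ∈ Set.Icc u v) (hy : y ∈ Set.Icc u v) :
    |Real.log (deriv (g^[k]) x / deriv (g^[k]) y)| ≤ K * (1 / (1 - σ⁻¹)) :=
  stmt0_general g hg hder u v k σ K hσ hK hKbdd hgrow hlen x y hx hy
end

section
/- Let M be a compact metric space, (f_t)_{t∈[0,1]} a continuous family of continuous maps with f₀ uniquely ergodic with invariant measure δ₀, and (θ_ε)_{ε>0} a family of probability measures on [0,1] with θ_ε → δ₀ weakly* as ε → 0. If μ^ε is a θ_ε-stationary measure for each ε, then every weak* accumulation point of (μ^ε)_{ε>0} as ε → 0 equals δ₀. -/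
/-! Stationarity writes `∫ φ dμ^ε - ∫ φ ∘ f₀ dμ^ε` as the `θ_ε`-average over `t` of
`∫ (φ ∘ f_t - φ ∘ f₀) dμ^ε`, which is bounded by `‖φ ∘ f_t - φ ∘ f₀‖_∞`. That sup-distance is a
continuous function of `t` vanishing at `0`, so its `θ_ε`-average tends to `0` as `θ_ε → δ₀`.
Since `ρ ↦ ∫ φ dρ` is weak* continuous, every accumulation point `ν` of `μ^ε` satisfies
`∫ φ dν = ∫ φ ∘ f₀ dν` for all `φ`, i.e. it is `f₀`-invariant, hence `ν = δ_p` by unique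
ergodicity. -/

open MeasureTheory Filter Set Topology
open scoped BoundedContinuousFunction

namespace ContinuousMap

variable {M : Type*} [TopologicalSpace M] [CompactSpace M] [MeasurableSpace M]
  [OpensMeasurableSpace M] (m : Measure M) [IsProbabilityMeasure m]

theorem dist_integral_le_dist (g h : C(M, ℝ)) :
    dist (∫ x, g x ∂m) (∫ x, h x ∂m) ≤ dist g h := by
  have hg : Integrable g m := (BoundedContinuousFunction.mkOfCompact g).integrable m
  have hh : Integrable h m := (BoundedContinuousFunction.mkOfCompact h).integrable m
  calc dist (∫ x, g x ∂m) (∫ x, h x ∂m) = ‖∫ x, (g - h) x ∂m‖ := by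
        rw [dist_eq_norm, ← integral_sub hg hh]; rfl
    _ ≤ ‖g - h‖ * m.real univ :=
        norm_integral_le_of_norm_le_const (ae_of_all _ (g - h).norm_coe_le_norm)
    _ = dist g h := by rw [probReal_univ, mul_one, dist_eq_norm]

theorem lipschitzWith_integral : LipschitzWith 1 fun g : C(M, ℝ) => ∫ x, g x ∂m :=
  LipschitzWith.of_dist_le_mul fun g h => by
    simpa only [NNReal.coe_one, one_mul] using dist_integral_le_dist m g h

end ContinuousMap

theorem MapClusterPt.eq_of_tendsto {X ι : Type*} [TopologicalSpace X] [T2Space X]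
    {l : Filter ι} {u : ι → X} {x y : X} (hx : MapClusterPt x l u) (hy : Tendsto u l (𝓝 y)) :
    x = y :=
  eq_of_nhds_neBot (hx.neBot.mono (inf_le_inf_left _ hy))

namespace MeasureTheory

theorem dist_integral_integral_le_integral_dist {T M : Type*} [TopologicalSpace T]
    [MeasurableSpace T] [OpensMeasurableSpace T] [TopologicalSpace M] [CompactSpace M]
    [MeasurableSpace M] [OpensMeasurableSpace M] (θ : Measure T) [IsProbabilityMeasure θ]
    (m : Measure M) [IsProbabilityMeasure m] (F : C(T, C(M, ℝ))) (g : C(M, ℝ))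
    (hint : Integrable (fun t => dist (F t) g) θ) :
    dist (∫ t, ∫ x, F t x ∂m ∂θ) (∫ x, g x ∂m) ≤ ∫ t, dist (F t) g ∂θ := by
  set c := ∫ x, g x ∂m
  have hH : Continuous fun t => ∫ x, F t x ∂m :=
    (ContinuousMap.lipschitzWith_integral m).continuous.comp F.continuous
  have hdev : ∀ t, ‖(∫ x, F t x ∂m) - c‖ ≤ dist (F t) g := fun t => by
    rw [← dist_eq_norm]; exact ContinuousMap.dist_integral_le_dist m (F t) g
  have hdev_int : Integrable (fun t => (∫ x, F t x ∂m) - c) θ :=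
    hint.mono' (hH.sub continuous_const).aestronglyMeasurable (ae_of_all _ hdev)
  have hH_int : Integrable (fun t => ∫ x, F t x ∂m) θ :=
    (hdev_int.add (integrable_const c)).congr (ae_of_all _ fun t => sub_add_cancel _ c)
  calc dist (∫ t, ∫ x, F t x ∂m ∂θ) c = ‖∫ t, ((∫ x, F t x ∂m) - c) ∂θ‖ := by
        rw [dist_eq_norm, integral_sub hH_int (integrable_const c), integral_const,
          probReal_univ, one_smul]
    _ ≤ ∫ t, dist (F t) g ∂θ := norm_integral_le_of_norm_le hint (ae_of_all _ hdev)

theorem ProbabilityMeasure.integral_eq_of_mapClusterPt {X ι : Type*} [TopologicalSpace X]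
    [MeasurableSpace X] [OpensMeasurableSpace X] {l : Filter ι} {μ : ι → ProbabilityMeasure X}
    {ν : ProbabilityMeasure X} (hν : MapClusterPt ν l μ) (φ ψ : X →ᵇ ℝ)
    (h : Tendsto (fun i => ∫ x, φ x ∂(μ i : Measure X) - ∫ x, ψ x ∂(μ i : Measure X)) l (𝓝 0)) :
    ∫ x, φ x ∂(ν : Measure X) = ∫ x, ψ x ∂(ν : Measure X) := by
  have hcont : Continuous fun ρ : ProbabilityMeasure X =>
      ∫ x, φ x ∂(ρ : Measure X) - ∫ x, ψ x ∂(ρ : Measure X) :=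
    (ProbabilityMeasure.continuous_integral_boundedContinuousFunction φ).sub
      (ProbabilityMeasure.continuous_integral_boundedContinuousFunction ψ)
  exact sub_eq_zero.mp ((hν.continuousAt_comp hcont.continuousAt).eq_of_tendsto h)

theorem Measure.map_eq_self_of_forall_integral_comp_eq {X : Type*} [TopologicalSpace X]
    [MeasurableSpace X] [HasOuterApproxClosed X] [BorelSpace X] {ν : Measure X}
    [IsFiniteMeasure ν] {g : X → X} (hg : Continuous g)
    (h : ∀ φ : X →ᵇ ℝ, ∫ x, φ (g x) ∂ν = ∫ x, φ x ∂ν) : ν.map g = ν := by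
  refine ext_of_forall_integral_eq_of_IsFiniteMeasure fun φ => ?_
  rw [integral_map hg.aemeasurable φ.continuous.aestronglyMeasurable]
  exact h φ

theorem tendsto_integral_sub_integral_comp_of_stationary {T M ι : Type*} [TopologicalSpace T]
    [MeasurableSpace T] [OpensMeasurableSpace T] [TopologicalSpace M] [CompactSpace M]
    [MeasurableSpace M] [OpensMeasurableSpace M] (f : T → M → M)
    (hf : Continuous fun q : T × M => f q.1 q.2) (t₀ : T) {l : Filter ι} (θ : ι → Measure T)
    (hθprob : ∀ᶠ i in l, IsProbabilityMeasure (θ i))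
    (hθconv : ∀ ψ : C(T, ℝ), Tendsto (fun i => ∫ t, ψ t ∂(θ i)) l (𝓝 (ψ t₀)))
    (μ : ι → ProbabilityMeasure M)
    (hstat : ∀ᶠ i in l, ∀ φ : C(M, ℝ),
      ∫ x, φ x ∂(μ i : Measure M) = ∫ t, ∫ x, φ (f t x) ∂(μ i : Measure M) ∂(θ i))
    (φ : C(M, ℝ)) :
    Tendsto (fun i => ∫ x, φ x ∂(μ i : Measure M) - ∫ x, φ (f t₀ x) ∂(μ i : Measure M)) l
      (𝓝 0) := by
  set F : C(T, C(M, ℝ)) := (φ.comp ⟨_, hf⟩).curry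
  set ψ : C(T, ℝ) := ⟨fun t => dist (F t) (F t₀), F.continuous.dist continuous_const⟩
  have hF_le : ∀ t, ‖F t‖ ≤ ‖φ‖ := fun t =>
    (ContinuousMap.norm_le _ (norm_nonneg φ)).mpr fun x => φ.norm_coe_le_norm _
  have hψ_le : ∀ t, ‖ψ t‖ ≤ 2 * ‖φ‖ := fun t => by
    change ‖dist (F t) (F t₀)‖ ≤ _
    rw [Real.norm_of_nonneg dist_nonneg, two_mul]
    exact (dist_le_norm_add_norm _ _).trans (add_le_add (hF_le t) (hF_le t₀))
  have hψ_conv : Tendsto (fun i => ∫ t, ψ t ∂(θ i)) l (𝓝 0) := by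
    simpa [ψ] using hθconv ψ
  refine squeeze_zero_norm' ?_ hψ_conv
  filter_upwards [hθprob, hstat] with i hθi hi
  rw [← dist_eq_norm, hi φ]
  exact dist_integral_integral_le_integral_dist (θ i) (μ i) F (F t₀)
    (.of_bound ψ.continuous.aestronglyMeasurable _ (ae_of_all _ hψ_le))

end MeasureTheory

theorem stmt11_general {M : Type*} [MetricSpace M] [CompactSpace M]
    [MeasurableSpace M] [BorelSpace M]
    (f : ℝ → M → M) (hcont : Continuous fun q : ℝ × M => f q.1 q.2)
    (p : M)
    (huniq : ∀ ν : Measure M, IsProbabilityMeasure ν →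
      Measure.map (f 0) ν = ν → ν = Measure.dirac p)
    (θ : ℝ → Measure ℝ) (hθprob : ∀ ε ∈ Set.Ioi (0 : ℝ), IsProbabilityMeasure (θ ε))
    (hθconv : ∀ ψ : C(ℝ, ℝ),
      Tendsto (fun ε => ∫ t, ψ t ∂(θ ε)) (nhdsWithin 0 (Set.Ioi (0 : ℝ)))
        (nhds (ψ 0)))
    (μ : ℝ → ProbabilityMeasure M)
    (hstat : ∀ ε ∈ Set.Ioi (0 : ℝ), ∀ φ : C(M, ℝ),
      ∫ x, φ x ∂(μ ε : Measure M)
        = ∫ t, ∫ x, φ (f t x) ∂(μ ε : Measure M) ∂(θ ε)) :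
    ∀ ν : ProbabilityMeasure M,
      MapClusterPt ν (nhdsWithin 0 (Set.Ioi (0 : ℝ))) μ →
      (ν : Measure M) = Measure.dirac p := by
  intro ν hν
  have hf₀ : Continuous (f 0) := hcont.comp (continuous_const.prodMk continuous_id)
  refine huniq ν inferInstance (Measure.map_eq_self_of_forall_integral_comp_eq hf₀ fun φ => ?_)
  refine (ProbabilityMeasure.integral_eq_of_mapClusterPt hν φ (φ.compContinuous ⟨f 0, hf₀⟩)
    ?_).symm
  exact tendsto_integral_sub_integral_comp_of_stationary f hcont 0 θ
    (eventually_nhdsWithin_of_forall hθprob) hθconv μ (eventually_nhdsWithin_of_forall hstat)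
    φ.toContinuousMap

/-- Stochastic stability for uniquely ergodic limits: if `f₀ = f 0` is
uniquely ergodic with invariant measure `δ_p`, the noise distributions
`θ ε` (probability measures on the parameter interval `[0,1]`) converge
weakly* to `δ₀`, and `μ ε` is `θ ε`-stationary for every `ε > 0`, then every
weak* accumulation point of `(μ ε)` as `ε → 0` equals `δ_p`. -/
theorem stmt11 {M : Type*} [MetricSpace M] [CompactSpace M]
    [MeasurableSpace M] [BorelSpace M]
    (f : ℝ → M → M) (hcont : Continuous fun q : ℝ × M => f q.1 q.2)
    (p : M) (hp : f 0 p = p)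
    (huniq : ∀ ν : Measure M, IsProbabilityMeasure ν →
      Measure.map (f 0) ν = ν → ν = Measure.dirac p)
    (θ : ℝ → Measure ℝ) (hθprob : ∀ ε ∈ Set.Ioi (0 : ℝ), IsProbabilityMeasure (θ ε))
    (hθsupp : ∀ ε ∈ Set.Ioi (0 : ℝ), θ ε (Set.Icc (0 : ℝ) 1)ᶜ = 0)
    (hθconv : ∀ ψ : C(ℝ, ℝ),
      Tendsto (fun ε => ∫ t, ψ t ∂(θ ε)) (nhdsWithin 0 (Set.Ioi (0 : ℝ)))
        (nhds (ψ 0)))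
    (μ : ℝ → ProbabilityMeasure M)
    (hstat : ∀ ε ∈ Set.Ioi (0 : ℝ), ∀ φ : C(M, ℝ),
      ∫ x, φ x ∂(μ ε : Measure M)
        = ∫ t, ∫ x, φ (f t x) ∂(μ ε : Measure M) ∂(θ ε)) :
    ∀ ν : ProbabilityMeasure M,
      MapClusterPt ν (nhdsWithin 0 (Set.Ioi (0 : ℝ))) μ →
      (ν : Measure M) = Measure.dirac p :=
  stmt11_general f hcont p huniq θ hθprob hθconv μ hstat
end

section
/- Let f : M → M be continuous on a compact metric space, μ₀ a Borel probability measure on M, ξ a finite Borel partition of M with μ₀(∂A) = 0 for every atom A of ξ, and (μ_t)_{t>0} a family of f_t-invariant measures (f_t continuous maps converging uniformly to f) with μ_t → μ₀ weakly*. Then for each fixed n ≥ 1, H_{μ_t}(⋁_{j=0}^{n−1} f_t^{−j}ξ) → H_{μ₀}(⋁_{j=0}^{n−1} f^{−j}ξ) as t → 0, and consequently limsup_{t→0} h_{μ_t}(f_t) ≤ h_{μ₀}(f) provided ξ is a generating partition for each (f_t, μ_t). -/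
open MeasureTheory Filter Set
open scoped Topology ENNReal NNReal

/-- The atom of the refined partition `⋁_{j<n} g^{-j} ξ` indexed by a word
`a : Fin n → Fin m`. -/
def joinAtom {M : Type*} (g : M → M) {m : ℕ} (ξ : Fin m → Set M)
    (n : ℕ) (a : Fin n → Fin m) : Set M :=
  ⋂ j : Fin n, g^[(j : ℕ)] ⁻¹' ξ (a j)

/-- The entropy `H_μ(⋁_{j<n} g^{-j} ξ)` of the refined partition. -/
noncomputable def joinEntropy {M : Type*} [MeasurableSpace M]
    (μ : Measure M) (g : M → M) {m : ℕ} (ξ : Fin m → Set M) (n : ℕ) : ℝ :=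
  ∑ a : Fin n → Fin m, Real.negMulLog ((μ (joinAtom g ξ n a)).toReal)

/-- Iterates of uniformly convergent maps converge uniformly (the limit being
uniformly continuous on a compact space). -/
lemma tendstoUniformly_iterate {M : Type*} [MetricSpace M] [CompactSpace M]
    {f : M → M} (hf : Continuous f) {ft : ℝ → M → M} {l : Filter ℝ}
    (hunif : TendstoUniformly ft f l) (j : ℕ) :
    TendstoUniformly (fun t => (ft t)^[j]) (f^[j]) l := by
  induction j with
  | zero =>
      rw [Metric.tendstoUniformly_iff]
      intro ε hε
      filter_upwards with t x
      simpa using hε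
  | succ j ih =>
      rw [Metric.tendstoUniformly_iff]
      intro ε hε
      obtain ⟨δ, hδ, hδε⟩ := Metric.uniformContinuous_iff.mp
        (CompactSpace.uniformContinuous_of_continuous hf) (ε/2) (by linarith)
      filter_upwards [Metric.tendstoUniformly_iff.mp ih δ hδ,
        Metric.tendstoUniformly_iff.mp hunif (ε/2) (by linarith)] with t h1 h2 x
      calc dist (f^[j+1] x) ((ft t)^[j+1] x)
          = dist (f (f^[j] x)) (ft t ((ft t)^[j] x)) := by
            rw [Function.iterate_succ_apply', Function.iterate_succ_apply']
        _ ≤ dist (f (f^[j] x)) (f ((ft t)^[j] x))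
            + dist (f ((ft t)^[j] x)) (ft t ((ft t)^[j] x)) := dist_triangle _ _ _
        _ < ε/2 + ε/2 := add_lt_add (hδε (h1 x)) (h2 _)
        _ = ε := by ring

lemma joinEntropy_nonneg {M : Type*} [MeasurableSpace M]
    (μ : Measure M) [IsProbabilityMeasure μ] (g : M → M) {m : ℕ}
    (ξ : Fin m → Set M) (n : ℕ) : 0 ≤ joinEntropy μ g ξ n := by
  refine Finset.sum_nonneg fun a _ => Real.negMulLog_nonneg ENNReal.toReal_nonneg ?_
  simpa using ENNReal.toReal_mono ENNReal.one_ne_top (prob_le_one (μ := μ))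

/-- Convergence of the refined partition entropies when `μ_t → μ₀` weakly* and
the atoms of `ξ` have `μ₀`-null boundaries; consequently the metric entropies
(computed via the generating partition `ξ`) satisfy
`limsup_{t→0} h_{μ_t}(f_t) ≤ h_{μ₀}(f)`. -/
theorem stmt13 {M : Type*} [MetricSpace M] [CompactSpace M]
    [MeasurableSpace M] [BorelSpace M]
    (f : M → M) (hf : Continuous f)
    (ft : ℝ → M → M) (hftc : ∀ t ∈ Set.Ioc (0 : ℝ) 1, Continuous (ft t))
    (hunif : TendstoUniformly ft f (nhdsWithin 0 (Set.Ioc (0 : ℝ) 1)))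
    (μt : ℝ → Measure M) (hμtprob : ∀ t ∈ Set.Ioc (0 : ℝ) 1, IsProbabilityMeasure (μt t))
    (hinv : ∀ t ∈ Set.Ioc (0 : ℝ) 1, Measure.map (ft t) (μt t) = μt t)
    (μ0 : Measure M) [IsProbabilityMeasure μ0]
    (hweak : ∀ φ : C(M, ℝ),
      Tendsto (fun t => ∫ x, φ x ∂(μt t)) (nhdsWithin 0 (Set.Ioc (0 : ℝ) 1))
        (nhds (∫ x, φ x ∂μ0)))
    (m : ℕ) (ξ : Fin m → Set M)
    (hmeas : ∀ i, MeasurableSet (ξ i))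
    (hdisj : Pairwise (Function.onFun Disjoint ξ))
    (hcover : ⋃ i, ξ i = Set.univ)
    (hbd : ∀ i, μ0 (frontier (ξ i)) = 0)
    (hEnt : ℝ → ℝ) (h0 : ℝ)
    -- `ξ` is generating for each `(f_t, μ_t)`:
    (hgen : ∀ t ∈ Set.Ioc (0 : ℝ) 1,
      hEnt t = ⨅ n : ℕ, ((n : ℝ) + 1)⁻¹ * joinEntropy (μt t) (ft t) ξ (n + 1))
    -- Kolmogorov–Sinai: the entropy of `f` dominates its entropy w.r.t. `ξ`:
    (hKS : (⨅ n : ℕ, ((n : ℝ) + 1)⁻¹ * joinEntropy μ0 f ξ (n + 1)) ≤ h0) :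
    (∀ n : ℕ, 1 ≤ n →
      Tendsto (fun t => joinEntropy (μt t) (ft t) ξ n)
        (nhdsWithin 0 (Set.Ioc (0 : ℝ) 1)) (nhds (joinEntropy μ0 f ξ n))) ∧
    limsup hEnt (nhdsWithin 0 (Set.Ioc (0 : ℝ) 1)) ≤ h0 := by
  set l : Filter ℝ := nhdsWithin 0 (Set.Ioc (0 : ℝ) 1) with hldef
  have hlne : l.NeBot := by
    refine mem_closure_iff_nhdsWithin_neBot.mp ?_
    rw [closure_Ioc (zero_ne_one)]
    exact ⟨le_refl (0:ℝ), zero_le_one⟩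
  have hmem : Set.Ioc (0:ℝ) 1 ∈ l := self_mem_nhdsWithin
  have hfm : Measurable f := hf.measurable
  -- probability measure bundling
  have hνP : ∀ t : ℝ, IsProbabilityMeasure (if t ∈ Set.Ioc (0:ℝ) 1 then μt t else μ0) := by
    intro t; split_ifs with h
    · exact hμtprob t h
    · infer_instance
  set P : ℝ → ProbabilityMeasure M :=
    fun t => ⟨if t ∈ Set.Ioc (0:ℝ) 1 then μt t else μ0, hνP t⟩ with hPdef
  set P0 : ProbabilityMeasure M := ⟨μ0, inferInstance⟩ with hP0def
  have hPcoe : ∀ t ∈ Set.Ioc (0:ℝ) 1, (P t : Measure M) = μt t := by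
    intro t ht
    show (if t ∈ Set.Ioc (0:ℝ) 1 then μt t else μ0) = μt t
    rw [if_pos ht]
  have hP0coe : (P0 : Measure M) = μ0 := rfl
  have hP : Tendsto P l (𝓝 P0) := by
    rw [ProbabilityMeasure.tendsto_iff_forall_integral_tendsto]
    intro g
    have h1 := hweak g.toContinuousMap
    refine Tendsto.congr' ?_ h1
    filter_upwards [hmem] with t ht
    rw [hPcoe t ht]
    rfl
  -- invariance of μ0 under f
  have hint : ∀ t ∈ Set.Ioc (0:ℝ) 1, ∀ φ : C(M,ℝ),
      ∫ x, φ x ∂(μt t) = ∫ x, φ (ft t x) ∂(μt t) := by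
    intro t ht φ
    conv_lhs => rw [← hinv t ht]
    exact integral_map (hftc t ht).measurable.aemeasurable
      φ.continuous.aestronglyMeasurable
  have hkeyinv : ∀ φ : C(M,ℝ), ∫ x, φ (f x) ∂μ0 = ∫ x, φ x ∂μ0 := by
    intro φ
    have h1 : Tendsto (fun t => ∫ x, φ (f x) ∂(μt t)) l (𝓝 (∫ x, φ (f x) ∂μ0)) :=
      hweak (φ.comp ⟨f, hf⟩)
    have h2 := hweak φ
    have h3 : Tendsto (fun t => (∫ x, φ (f x) ∂(μt t)) - ∫ x, φ x ∂(μt t)) l (𝓝 0) := by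
      rw [NormedAddCommGroup.tendsto_nhds_zero]
      intro ε hε
      obtain ⟨δ, hδ, hδε⟩ := Metric.uniformContinuous_iff.mp
        (CompactSpace.uniformContinuous_of_continuous φ.continuous) (ε/2) (by linarith)
      filter_upwards [hmem, Metric.tendstoUniformly_iff.mp hunif δ hδ] with t ht hd
      haveI := hμtprob t ht
      rw [hint t ht φ]
      have hi1 : Integrable (fun x => φ (f x)) (μt t) :=
        (BoundedContinuousFunction.mkOfCompact (φ.comp ⟨f, hf⟩)).integrable _
      have hi2 : Integrable (fun x => φ (ft t x)) (μt t) :=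
        (BoundedContinuousFunction.mkOfCompact (φ.comp ⟨ft t, hftc t ht⟩)).integrable _
      rw [← integral_sub hi1 hi2]
      have hb : ∀ᵐ x ∂(μt t), ‖φ (f x) - φ (ft t x)‖ ≤ ε/2 := by
        refine Eventually.of_forall fun x => ?_
        have : dist (φ (f x)) (φ (ft t x)) < ε/2 := hδε (hd x)
        rw [Real.dist_eq] at this
        exact this.le
      calc ‖∫ x, (φ (f x) - φ (ft t x)) ∂(μt t)‖
          ≤ (ε/2) * ((μt t) Set.univ).toReal := norm_integral_le_of_norm_le_const hb
        _ = ε/2 := by simp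
        _ < ε := by linarith
    have h4 := tendsto_nhds_unique (h1.sub h2) h3
    linarith [h4]
  have hinv0 : Measure.map f μ0 = μ0 := by
    haveI : IsProbabilityMeasure (Measure.map f μ0) :=
      Measure.isProbabilityMeasure_map hfm.aemeasurable
    refine ext_of_forall_lintegral_eq_of_IsFiniteMeasure fun g => ?_
    rw [lintegral_map g.measurable_coe_ennreal_comp hfm]
    set gf : BoundedContinuousFunction M NNReal := g.compContinuous ⟨f, hf⟩ with hgf
    have e1 := BoundedContinuousFunction.toReal_lintegral_coe_eq_integral gf μ0
    have e2 := BoundedContinuousFunction.toReal_lintegral_coe_eq_integral g μ0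
    have e3 := hkeyinv ⟨fun x => (g x : ℝ), by fun_prop⟩
    have efin1 : (∫⁻ x, (gf x : ℝ≥0∞) ∂μ0) ≠ ⊤ :=
      (BoundedContinuousFunction.lintegral_lt_top_of_nnreal μ0 gf).ne
    have efin2 : (∫⁻ x, (g x : ℝ≥0∞) ∂μ0) ≠ ⊤ :=
      (BoundedContinuousFunction.lintegral_lt_top_of_nnreal μ0 g).ne
    have : (∫⁻ x, (gf x : ℝ≥0∞) ∂μ0) = ∫⁻ x, (g x : ℝ≥0∞) ∂μ0 := by
      rw [← ENNReal.toReal_eq_toReal_iff' efin1 efin2, e1, e2]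
      exact e3
    exact this
  have hiterinv : ∀ j : ℕ, Measure.map (f^[j]) μ0 = μ0 := by
    intro j
    induction j with
    | zero => simp [Measure.map_id]
    | succ j ih =>
        rw [Function.iterate_succ', ← Measure.map_map hfm (hfm.iterate j), ih, hinv0]
  have hnullpre : ∀ (j : ℕ) (i : Fin m), μ0 (f^[j] ⁻¹' frontier (ξ i)) = 0 := by
    intro j i
    rw [← Measure.map_apply (hfm.iterate j) isClosed_frontier.measurableSet, hiterinv j]
    exact hbd i
  -- the key convergence of measures of join atoms
  have hkey : ∀ (n : ℕ) (a : Fin n → Fin m),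
      Tendsto (fun t => μt t (joinAtom (ft t) ξ n a)) l (𝓝 (μ0 (joinAtom f ξ n a))) := by
    intro n a
    set A := joinAtom f ξ n a with hA
    set U : ℝ → Set M :=
      fun δ => ⋂ j : Fin n, f^[(j:ℕ)] ⁻¹' (Metric.cthickening δ ((ξ (a j))ᶜ))ᶜ with hUdef
    set Cs : ℝ → Set M :=
      fun δ => ⋂ j : Fin n, f^[(j:ℕ)] ⁻¹' (Metric.cthickening δ (ξ (a j))) with hCdef
    have hUopen : ∀ δ, IsOpen (U δ) := fun δ =>
      isOpen_iInter_of_finite fun j =>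
        (Metric.isClosed_cthickening.isOpen_compl).preimage (hf.iterate _)
    have hCclosed : ∀ δ, IsClosed (Cs δ) := fun δ =>
      isClosed_iInter fun j => Metric.isClosed_cthickening.preimage (hf.iterate _)
    have hUsub : ∀ δ, 0 < δ → ∀ t,
        (∀ j : Fin n, ∀ x, dist (f^[(j:ℕ)] x) ((ft t)^[(j:ℕ)] x) < δ) →
        U δ ⊆ joinAtom (ft t) ξ n a := by
      intro δ hδ t hclose x hx
      refine mem_iInter.mpr fun j => ?_
      have hxj := mem_iInter.mp hx j
      by_contra hmem'
      exact hxj (Metric.mem_cthickening_of_dist_le _ _ δ _ hmem' (hclose j x).le)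
    have hCsub : ∀ δ, 0 < δ → ∀ t,
        (∀ j : Fin n, ∀ x, dist (f^[(j:ℕ)] x) ((ft t)^[(j:ℕ)] x) < δ) →
        joinAtom (ft t) ξ n a ⊆ Cs δ := by
      intro δ hδ t hclose x hx
      refine mem_iInter.mpr fun j => ?_
      have hxj := mem_iInter.mp hx j
      exact Metric.mem_cthickening_of_dist_le _ _ δ _ hxj (hclose j x).le
    set d : ℕ → ℝ := fun k => 1/(k+1) with hddef
    have hdpos : ∀ k, 0 < d k := fun k => by positivity
    have hdanti : Antitone d := by
      intro p q h
      apply one_div_le_one_div_of_le (by positivity)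
      have : (p:ℝ) ≤ q := Nat.cast_le.mpr h
      linarith
    have hdto : Tendsto d atTop (𝓝 0) := tendsto_one_div_add_atTop_nhds_zero_nat
    have hSc : ∀ S : Set M, ⋂ k : ℕ, Metric.cthickening (d k) S = closure S := by
      intro S
      rw [Metric.closure_eq_iInter_cthickening' S (Set.range d) ?_, biInter_range]
      intro ε hε
      obtain ⟨k, hk⟩ := ((hdto.eventually_lt_const hε).and
        (Eventually.of_forall hdpos)).exists
      exact ⟨d k, ⟨k, rfl⟩, hk.2, hk.1.le⟩
    have hCint : ⋂ k : ℕ, Cs (d k) = ⋂ j : Fin n, f^[(j:ℕ)] ⁻¹' closure (ξ (a j)) := by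
      calc ⋂ k : ℕ, Cs (d k)
          = ⋂ j : Fin n, ⋂ k : ℕ, f^[(j:ℕ)] ⁻¹' Metric.cthickening (d k) (ξ (a j)) :=
            iInter_comm _
        _ = ⋂ j : Fin n, f^[(j:ℕ)] ⁻¹' closure (ξ (a j)) :=
            iInter_congr fun j => by rw [← preimage_iInter, hSc]
    have hAint : (⋂ j : Fin n, f^[(j:ℕ)] ⁻¹' interior (ξ (a j))) ⊆ ⋃ k : ℕ, U (d k) := by
      intro x hx
      have hj : ∀ j : Fin n, ∀ᶠ k : ℕ in atTop,
          f^[(j:ℕ)] x ∉ Metric.cthickening (d k) ((ξ (a j))ᶜ) := by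
        intro j
        have hxj := mem_iInter.mp hx j
        have hpos : 0 < EMetric.infEdist (f^[(j:ℕ)] x) ((ξ (a j))ᶜ) := by
          rw [pos_iff_ne_zero]
          intro h0'
          have : f^[(j:ℕ)] x ∈ closure ((ξ (a j))ᶜ) :=
            EMetric.mem_closure_iff_infEdist_zero.mpr h0'
          rw [closure_compl] at this
          exact this hxj
        have hof : Tendsto (fun k => ENNReal.ofReal (d k)) atTop (𝓝 0) := by
          simpa using ENNReal.tendsto_ofReal hdto
        filter_upwards [hof.eventually_lt_const hpos] with k hk hmem'
        rw [Metric.mem_cthickening_iff] at hmem'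
        exact absurd hmem' (not_le.mpr hk)
      obtain ⟨k, hk⟩ := (Filter.eventually_all.mpr hj).exists
      exact mem_iUnion.mpr ⟨k, mem_iInter.mpr fun j => hk j⟩
    have hNull : μ0 (⋃ j : Fin n, f^[(j:ℕ)] ⁻¹' frontier (ξ (a j))) = 0 :=
      measure_iUnion_null fun j => hnullpre _ _
    have hA_int : μ0 A = μ0 (⋂ j : Fin n, f^[(j:ℕ)] ⁻¹' interior (ξ (a j))) := by
      apply le_antisymm
      · have hsub : A ⊆ (⋂ j : Fin n, f^[(j:ℕ)] ⁻¹' interior (ξ (a j))) ∪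
            ⋃ j : Fin n, f^[(j:ℕ)] ⁻¹' frontier (ξ (a j)) := by
          intro x hx
          by_cases hall : ∀ j : Fin n, f^[(j:ℕ)] x ∈ interior (ξ (a j))
          · exact Or.inl (mem_iInter.mpr hall)
          · push_neg at hall
            obtain ⟨j, hjx⟩ := hall
            have hxj : f^[(j:ℕ)] x ∈ ξ (a j) := mem_iInter.mp hx j
            have : f^[(j:ℕ)] x ∈ frontier (ξ (a j)) := by
              have hcl : f^[(j:ℕ)] x ∈ closure (ξ (a j)) := subset_closure hxj
              rw [closure_eq_interior_union_frontier] at hcl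
              exact hcl.resolve_left hjx
            exact Or.inr (mem_iUnion.mpr ⟨j, this⟩)
        calc μ0 A ≤ μ0 _ := measure_mono hsub
          _ ≤ μ0 (⋂ j : Fin n, f^[(j:ℕ)] ⁻¹' interior (ξ (a j))) +
              μ0 (⋃ j : Fin n, f^[(j:ℕ)] ⁻¹' frontier (ξ (a j))) := measure_union_le _ _
          _ = μ0 (⋂ j : Fin n, f^[(j:ℕ)] ⁻¹' interior (ξ (a j))) := by rw [hNull, add_zero]
      · exact measure_mono (iInter_mono fun j => preimage_mono interior_subset)
    have hA_clo : μ0 A = μ0 (⋂ j : Fin n, f^[(j:ℕ)] ⁻¹' closure (ξ (a j))) := by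
      apply le_antisymm
      · exact measure_mono (iInter_mono fun j => preimage_mono subset_closure)
      · have hsub : (⋂ j : Fin n, f^[(j:ℕ)] ⁻¹' closure (ξ (a j))) ⊆ A ∪
            ⋃ j : Fin n, f^[(j:ℕ)] ⁻¹' frontier (ξ (a j)) := by
          intro x hx
          by_cases hall : ∀ j : Fin n, f^[(j:ℕ)] x ∈ ξ (a j)
          · exact Or.inl (mem_iInter.mpr hall)
          · push_neg at hall
            obtain ⟨j, hjx⟩ := hall
            have hxj : f^[(j:ℕ)] x ∈ closure (ξ (a j)) := mem_iInter.mp hx j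
            have : f^[(j:ℕ)] x ∈ frontier (ξ (a j)) := by
              rw [closure_eq_self_union_frontier] at hxj
              exact hxj.resolve_left hjx
            exact Or.inr (mem_iUnion.mpr ⟨j, this⟩)
        calc μ0 (⋂ j : Fin n, f^[(j:ℕ)] ⁻¹' closure (ξ (a j)))
            ≤ μ0 _ := measure_mono hsub
          _ ≤ μ0 A + μ0 (⋃ j : Fin n, f^[(j:ℕ)] ⁻¹' frontier (ξ (a j))) := measure_union_le _ _
          _ = μ0 A := by rw [hNull, add_zero]
    have hAne : μ0 A ≠ ⊤ := measure_ne_top μ0 A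
    have hCmono : Antitone fun k : ℕ => Cs (d k) := fun p q hpq =>
      iInter_mono fun j => preimage_mono (Metric.cthickening_mono (hdanti hpq) _)
    have hCt : Tendsto (fun k => μ0 (Cs (d k))) atTop (𝓝 (μ0 A)) := by
      have ht := tendsto_measure_iInter_atTop (μ := μ0)
        (fun k => ((hCclosed (d k)).measurableSet).nullMeasurableSet) hCmono
        ⟨0, measure_ne_top μ0 _⟩
      rw [hCint] at ht
      rw [hA_clo]
      exact ht
    have hUmono : Monotone fun k : ℕ => U (d k) := by
      intro p q hpq
      exact iInter_mono fun j => preimage_mono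
        (compl_subset_compl.mpr (Metric.cthickening_mono (hdanti hpq) _))
    have hUt : Tendsto (fun k => μ0 (U (d k))) atTop (𝓝 (μ0 (⋃ k, U (d k)))) :=
      tendsto_measure_iUnion_atTop hUmono
    have hUineq : μ0 A ≤ μ0 (⋃ k, U (d k)) := by
      rw [hA_int]; exact measure_mono hAint
    have hclose : ∀ δ, 0 < δ → ∀ᶠ t in l,
        ∀ j : Fin n, ∀ x, dist (f^[(j:ℕ)] x) ((ft t)^[(j:ℕ)] x) < δ := by
      intro δ hδ
      rw [eventually_all]
      intro j
      exact Metric.tendstoUniformly_iff.mp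
        (tendstoUniformly_iterate hf hunif ((j:ℕ))) δ hδ
    rw [ENNReal.tendsto_nhds hAne]
    intro ε hε
    obtain ⟨k₁, hk₁⟩ := (hCt.eventually_lt_const (ENNReal.lt_add_right hAne hε.ne')).exists
    have hupper : ∀ᶠ t in l, μt t (joinAtom (ft t) ξ n a) ≤ μ0 A + ε := by
      have hlimsup : limsup (fun t => (P t : Measure M) (Cs (d k₁))) l ≤ μ0 (Cs (d k₁)) :=
        ProbabilityMeasure.limsup_measure_closed_le_of_tendsto hP (hCclosed _)
      have hev2 := eventually_lt_of_limsup_lt (lt_of_le_of_lt hlimsup hk₁)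
      filter_upwards [hev2, hclose (d k₁) (hdpos _), hmem] with t h1 h2 ht
      have hsub := hCsub (d k₁) (hdpos _) t h2
      calc μt t (joinAtom (ft t) ξ n a) ≤ μt t (Cs (d k₁)) := measure_mono hsub
        _ = (P t : Measure M) (Cs (d k₁)) := by rw [hPcoe t ht]
        _ ≤ μ0 A + ε := h1.le
    have hlower : ∀ᶠ t in l, μ0 A - ε ≤ μt t (joinAtom (ft t) ξ n a) := by
      by_cases h0' : μ0 A - ε = 0
      · exact Eventually.of_forall fun t => by simp [h0']
      · have hA0 : μ0 A ≠ 0 := by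
          intro h; exact h0' (by rw [h]; exact zero_tsub ε)
        have hlt : μ0 A - ε < μ0 A := ENNReal.sub_lt_self hAne hA0 hε.ne'
        obtain ⟨k₂, hk₂⟩ := (hUt.eventually_const_lt (lt_of_lt_of_le hlt hUineq)).exists
        have hliminf : μ0 (U (d k₂)) ≤ liminf (fun t => (P t : Measure M) (U (d k₂))) l :=
          ProbabilityMeasure.le_liminf_measure_open_of_tendsto hP (hUopen _)
        have hev2 := eventually_lt_of_lt_liminf (lt_of_lt_of_le hk₂ hliminf)
        filter_upwards [hev2, hclose (d k₂) (hdpos _), hmem] with t h1 h2 ht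
        have hsub := hUsub (d k₂) (hdpos _) t h2
        calc μ0 A - ε ≤ (P t : Measure M) (U (d k₂)) := h1.le
          _ = μt t (U (d k₂)) := by rw [hPcoe t ht]
          _ ≤ μt t (joinAtom (ft t) ξ n a) := measure_mono hsub
    filter_upwards [hupper, hlower] with t h1 h2
    exact ⟨h2, h1⟩
  -- Part 1
  have hpart1 : ∀ n : ℕ, 1 ≤ n →
      Tendsto (fun t => joinEntropy (μt t) (ft t) ξ n) l (𝓝 (joinEntropy μ0 f ξ n)) := by
    intro n _
    simp only [joinEntropy]
    apply tendsto_finset_sum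
    intro a _
    have h2 : Tendsto (fun t => (μt t (joinAtom (ft t) ξ n a)).toReal) l
        (𝓝 ((μ0 (joinAtom f ξ n a)).toReal)) :=
      (ENNReal.tendsto_toReal (measure_ne_top μ0 _)).comp (hkey n a)
    exact (Real.continuous_negMulLog.tendsto _).comp h2
  refine ⟨hpart1, ?_⟩
  -- Part 2
  have hg : ∀ n : ℕ, Tendsto (fun t => ((n:ℝ)+1)⁻¹ * joinEntropy (μt t) (ft t) ξ (n+1)) l
      (𝓝 (((n:ℝ)+1)⁻¹ * joinEntropy μ0 f ξ (n+1))) := fun n =>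
    (hpart1 (n+1) (by omega)).const_mul _
  have hcobdd : IsCoboundedUnder (· ≤ ·) l hEnt := by
    apply isCoboundedUnder_le_of_eventually_le l (x := 0)
    filter_upwards [hmem] with t ht
    rw [hgen t ht]
    haveI := hμtprob t ht
    exact le_ciInf fun k => mul_nonneg (by positivity) (joinEntropy_nonneg _ _ _ _)
  have hbound : ∀ n : ℕ, limsup hEnt l ≤ ((n:ℝ)+1)⁻¹ * joinEntropy μ0 f ξ (n+1) := by
    intro n
    have hle : hEnt ≤ᶠ[l] fun t => ((n:ℝ)+1)⁻¹ * joinEntropy (μt t) (ft t) ξ (n+1) := by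
      filter_upwards [hmem] with t ht
      rw [hgen t ht]
      haveI := hμtprob t ht
      apply ciInf_le ?_ n
      refine ⟨0, ?_⟩
      rintro r ⟨k, rfl⟩
      exact mul_nonneg (by positivity) (joinEntropy_nonneg _ _ _ _)
    calc limsup hEnt l
        ≤ limsup (fun t => ((n:ℝ)+1)⁻¹ * joinEntropy (μt t) (ft t) ξ (n+1)) l :=
          limsup_le_limsup hle hcobdd (hg n).isBoundedUnder_le
      _ = ((n:ℝ)+1)⁻¹ * joinEntropy μ0 f ξ (n+1) := (hg n).limsup_eq
  calc limsup hEnt l ≤ ⨅ n : ℕ, ((n:ℝ)+1)⁻¹ * joinEntropy μ0 f ξ (n+1) := le_ciInf hbound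
    _ ≤ h0 := hKS
end

section
/- Let (f_t) be a family of C¹ circle maps, σ₀ > 1, and suppose there exist arcs A (the 'expanding region') and B such that |f_t'(x)| ≥ σ₀ for all t and all x ∈ A, and such that for every x ∈ B and every random orbit with parameters ω ∈ [t₀⁻, t₀]^ℕ (t₀⁻ > 0) there are ℓ = ℓ(ω,x) ≤ ℓ₀ and c_ℓ > 1 with |(f_ω^ℓ)'(x)| ≥ c_ℓ. Then setting β = min{ (1/ℓ) log c_ℓ : 1 ≤ ℓ ≤ ℓ₀ } and σ = min{σ₀, e^β} > 1, for every x ∈ S¹ and every ω ∈ [t₀⁻, t₀]^ℕ one has limsup_{n→∞} (1/n) log|(f_ω^n)'(x)| ≥ log σ > 0. -/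
open Filter Set

/-- The random orbit `f_ω^n = f_{ω_{n-1}} ∘ ⋯ ∘ f_{ω_0}`. -/
def randIter (f : ℝ → ℝ → ℝ) (ω : ℕ → ℝ) : ℕ → ℝ → ℝ
  | 0 => id
  | n + 1 => fun x => f (ω n) (randIter f ω n x)

/-- The derivative of the random iterate, via the chain rule: the product of
the one-step derivatives along the random orbit. -/
noncomputable def randDeriv (f : ℝ → ℝ → ℝ) (ω : ℕ → ℝ) (n : ℕ) (x : ℝ) : ℝ :=
  ∏ j ∈ Finset.range n, deriv (f (ω j)) (randIter f ω j x)

lemma randIter_add (f : ℝ → ℝ → ℝ) (ω : ℕ → ℝ) (n m : ℕ) (x : ℝ) :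
    randIter f ω (n + m) x = randIter f (fun j => ω (n + j)) m (randIter f ω n x) := by
  induction m with
  | zero => rfl
  | succ m ih => exact congrArg (f (ω (n + m))) ih

lemma randDeriv_add (f : ℝ → ℝ → ℝ) (ω : ℕ → ℝ) (n m : ℕ) (x : ℝ) :
    randDeriv f ω (n + m) x
      = randDeriv f ω n x * randDeriv f (fun j => ω (n + j)) m (randIter f ω n x) := by
  unfold randDeriv
  rw [Finset.prod_range_add]
  congr 1
  refine Finset.prod_congr rfl fun j _ => ?_
  rw [randIter_add]

/-- Uniform positive Lyapunov exponents for random orbits: one-step expansion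
`σ₀` on the region `A` and block expansion `c_ℓ` (blocks of length `ℓ ≤ ℓ₀`)
through the region `B` give
`limsup (1/n) log |(f_ω^n)'(x)| ≥ log σ > 0` with
`σ = min(σ₀, e^β)`, `β = min_{1 ≤ ℓ ≤ ℓ₀} (1/ℓ) log c_ℓ`. -/
theorem stmt16 (f : ℝ → ℝ → ℝ) (hf : ∀ t, ContDiff ℝ 1 (f t))
    (A B : Set ℝ) (hcover : A ∪ B = Set.univ)
    (t₀ t₀' : ℝ) (ht₀' : 0 < t₀') (ht₀ : t₀' ≤ t₀)
    (σ₀ : ℝ) (hσ₀ : 1 < σ₀)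
    (hA : ∀ t ∈ Set.Icc t₀' t₀, ∀ x ∈ A, σ₀ ≤ |deriv (f t) x|)
    (ℓ₀ : ℕ) (hℓ₀ : 1 ≤ ℓ₀) (c : ℕ → ℝ)
    (hc : ∀ ℓ, 1 ≤ ℓ → ℓ ≤ ℓ₀ → 1 < c ℓ)
    (hB : ∀ x ∈ B, ∀ ω : ℕ → ℝ, (∀ n, ω n ∈ Set.Icc t₀' t₀) →
      ∃ ℓ, 1 ≤ ℓ ∧ ℓ ≤ ℓ₀ ∧ c ℓ ≤ |randDeriv f ω ℓ x|)
    (β σ : ℝ)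
    (hβ : β = Finset.inf' (Finset.Icc 1 ℓ₀) (Finset.nonempty_Icc.mpr hℓ₀)
      (fun ℓ => Real.log (c ℓ) / ℓ))
    (hσ : σ = min σ₀ (Real.exp β)) :
    1 < σ ∧
    ∀ x : ℝ, ∀ ω : ℕ → ℝ, (∀ n, ω n ∈ Set.Icc t₀' t₀) →
      (Real.log σ : EReal) ≤
        limsup (fun n : ℕ =>
          ((Real.log |randDeriv f ω n x| / n : ℝ) : EReal)) atTop := by
  -- β > 0
  have hβpos : 0 < β := by
    rw [hβ, Finset.lt_inf'_iff]
    intro ℓ hℓ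
    rw [Finset.mem_Icc] at hℓ
    have h1 : (1 : ℝ) < c ℓ := hc ℓ hℓ.1 hℓ.2
    have hℓpos : (0 : ℝ) < ℓ := by exact_mod_cast hℓ.1
    exact div_pos (Real.log_pos h1) hℓpos
  have hσ1 : 1 < σ := by
    rw [hσ]
    exact lt_min hσ₀ (Real.one_lt_exp_iff.mpr hβpos)
  have hσpos : 0 < σ := lt_trans one_pos hσ1
  refine ⟨hσ1, fun x ω hω => ?_⟩
  -- key extension step
  have key : ∀ n : ℕ, σ ^ n ≤ |randDeriv f ω n x| →
      ∃ ℓ, 1 ≤ ℓ ∧ σ ^ (n + ℓ) ≤ |randDeriv f ω (n + ℓ) x| := by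
    intro n hn
    set y := randIter f ω n x with hy
    set ω' : ℕ → ℝ := fun j => ω (n + j) with hω'
    have hω'mem : ∀ j, ω' j ∈ Set.Icc t₀' t₀ := fun j => hω (n + j)
    have hyAB : y ∈ A ∪ B := hcover ▸ Set.mem_univ y
    have habs : ∀ ℓ, σ ^ ℓ ≤ |randDeriv f ω' ℓ y| →
        σ ^ (n + ℓ) ≤ |randDeriv f ω (n + ℓ) x| := by
      intro ℓ hℓ
      rw [randDeriv_add f ω n ℓ x, abs_mul, pow_add]
      exact mul_le_mul hn hℓ (pow_pos hσpos ℓ).le (abs_nonneg _)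
    rcases hyAB with hyA | hyB
    · refine ⟨1, le_rfl, habs 1 ?_⟩
      have h1 : randDeriv f ω' 1 y = deriv (f (ω' 0)) y := by
        unfold randDeriv
        rw [Finset.prod_range_one]
        rfl
      rw [h1, pow_one]
      have : σ ≤ σ₀ := hσ ▸ min_le_left _ _
      exact this.trans (hA (ω' 0) (hω'mem 0) y hyA)
    · obtain ⟨ℓ, hℓ1, hℓℓ₀, hcl⟩ := hB y hyB ω' hω'mem
      refine ⟨ℓ, hℓ1, habs ℓ ?_⟩
      have hβle : β ≤ Real.log (c ℓ) / ℓ := by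
        rw [hβ]
        exact Finset.inf'_le _ (Finset.mem_Icc.mpr ⟨hℓ1, hℓℓ₀⟩)
      have hσexp : σ ≤ Real.exp (Real.log (c ℓ) / ℓ) :=
        (hσ ▸ min_le_right _ _).trans (Real.exp_le_exp.mpr hβle)
      have hℓne : (ℓ : ℝ) ≠ 0 := by positivity
      have hpow : σ ^ ℓ ≤ c ℓ := by
        calc σ ^ ℓ ≤ Real.exp (Real.log (c ℓ) / ℓ) ^ ℓ :=
              pow_le_pow_left₀ hσpos.le hσexp ℓ
          _ = Real.exp ((ℓ : ℝ) * (Real.log (c ℓ) / ℓ)) := (Real.exp_nat_mul _ ℓ).symm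
          _ = Real.exp (Real.log (c ℓ)) := by rw [mul_div_cancel₀ _ hℓne]
          _ = c ℓ := Real.exp_log (lt_trans one_pos (hc ℓ hℓ1 hℓℓ₀))
      exact hpow.trans hcl
  -- inductively: for every k there is n ≥ k with σ^n ≤ |D n|
  have main : ∀ k : ℕ, ∃ n, k ≤ n ∧ σ ^ n ≤ |randDeriv f ω n x| := by
    intro k
    induction k with
    | zero =>
      refine ⟨0, le_rfl, ?_⟩
      simp [randDeriv]
    | succ k ih =>
      obtain ⟨n, hkn, hn⟩ := ih
      obtain ⟨ℓ, hℓ1, hnl⟩ := key n hn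
      exact ⟨n + ℓ, by omega, hnl⟩
  -- conclude via frequently
  refine le_limsup_of_frequently_le ?_
  rw [Filter.frequently_atTop]
  intro N
  obtain ⟨n, hn1, hn⟩ := main (max N 1)
  refine ⟨n, le_trans (le_max_left N 1) hn1, ?_⟩
  have hnpos : 0 < n := lt_of_lt_of_le (le_max_right N 1) hn1
  have hnR : (0 : ℝ) < n := by exact_mod_cast hnpos
  have hlog : (n : ℝ) * Real.log σ ≤ Real.log |randDeriv f ω n x| := by
    have := Real.log_le_log (pow_pos hσpos n) hn
    rwa [Real.log_pow] at this
  have hreal : Real.log σ ≤ Real.log |randDeriv f ω n x| / n := by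
    rw [le_div_iff₀ hnR]
    linarith [hlog]
  exact_mod_cast EReal.coe_le_coe_iff.mpr hreal
end

section
/- Let (f_t)_{t∈[0,t₀]} be C¹ circle maps and suppose there exist σ₀ > 1 and δ₁ > 0 (an injectivity radius) such that each f_t restricted to any ball of radius δ₁ is a diffeomorphism onto its image. Fix x, y ∈ S¹ and ω ∈ [0,t₀]^ℕ with dist(f_ω^n(x), f_ω^n(y)) ≤ δ for all n ≥ 0, where 0 < δ < δ₁. If there is an increasing sequence n₁ < n₂ < … such that along the blocks [n_{2k−1}, n_{2k}] every step derivative on the arc joining the two orbits is at least σ₀, and every other step derivative is at least 1, then dist(x, y) ≤ σ₀^{−Σ_{j=1}^{k}(n_{2j}−n_{2j−1})} for every k; in particular if Σ(n_{2j}−n_{2j−1}) = ∞ then x = y. -/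
/-!
By the mean value theorem each step multiplies the distance between the two orbits by at least
the lower bound of the step derivative on the arc joining them: by at least `1` always and by at
least `σ₀` on the blocks. After the first `k` blocks, i.e. at time `n (2 * k)`, the distance has
therefore grown by a factor `σ₀ ^ S_k`, with `S_k` the total length of those blocks; as it is
still at most `δ ≤ 1`, we get `|x - y| ≤ σ₀ ^ (-S_k)`, which tends to `0` when `S_k` is unbounded.
-/

open Set

open Finset Filter Topology

lemma mul_abs_sub_le_abs_sub_of_le_abs_deriv {F : ℝ → ℝ} (hF : Differentiable ℝ F) {a b m : ℝ}
    (h : ∀ z ∈ uIcc a b, m ≤ |deriv F z|) : m * |a - b| ≤ |F a - F b| := by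
  wlog hab : a < b generalizing a b
  · rcases (not_lt.1 hab).eq_or_lt with rfl | hba
    · simp
    · rw [abs_sub_comm a, abs_sub_comm (F a)]
      exact this (uIcc_comm a b ▸ h) hba
  obtain ⟨c, hc, hslope⟩ :=
    exists_deriv_eq_slope F hab hF.continuous.continuousOn hF.differentiableOn
  have hab' : |a - b| ≠ 0 := abs_ne_zero.2 (sub_ne_zero.2 hab.ne)
  calc m * |a - b| ≤ |deriv F c| * |a - b| :=
        mul_le_mul_of_nonneg_right (h c (Icc_subset_uIcc (Ioo_subset_Icc_self hc)))
          (abs_nonneg _)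
    _ = |F a - F b| := by
        rw [hslope, abs_div, abs_sub_comm b a, abs_sub_comm (F b), div_mul_cancel₀ _ hab']

lemma prod_mul_abs_sub_le_abs_randIter_sub {f : ℝ → ℝ → ℝ} (hf : ∀ t, Differentiable ℝ (f t))
    {ω : ℕ → ℝ} {x y : ℝ} {ρ : ℕ → ℝ} (hρ : ∀ j, 0 ≤ ρ j)
    (hderiv : ∀ j, ∀ z ∈ uIcc (randIter f ω j x) (randIter f ω j y), ρ j ≤ |deriv (f (ω j)) z|)
    (N : ℕ) :
    (∏ j ∈ range N, ρ j) * |x - y| ≤ |randIter f ω N x - randIter f ω N y| := by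
  induction N with
  | zero => simp [randIter]
  | succ N ih =>
    calc (∏ j ∈ range (N + 1), ρ j) * |x - y|
        = ρ N * ((∏ j ∈ range N, ρ j) * |x - y|) := by rw [prod_range_succ]; ring
      _ ≤ ρ N * |randIter f ω N x - randIter f ω N y| := mul_le_mul_of_nonneg_left ih (hρ N)
      _ ≤ _ := mul_abs_sub_le_abs_sub_of_le_abs_deriv (hf _) (hderiv N)

def blockUnion (n : ℕ → ℕ) (k : ℕ) : Finset ℕ :=
  (range k).biUnion fun i => Finset.Ico (n (2 * i)) (n (2 * i + 1))

lemma mem_blockUnion {n : ℕ → ℕ} {k j : ℕ} :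
    j ∈ blockUnion n k ↔ ∃ i < k, j ∈ Set.Ico (n (2 * i)) (n (2 * i + 1)) := by
  simp [blockUnion]

lemma card_blockUnion {n : ℕ → ℕ} (hn : Monotone n) (k : ℕ) :
    #(blockUnion n k) = ∑ i ∈ range k, (n (2 * i + 1) - n (2 * i)) := by
  have hdisj : (Finset.range k : Set ℕ).PairwiseDisjoint
      fun i => Finset.Ico (n (2 * i)) (n (2 * i + 1)) := by
    intro i hi i' hi' hne
    wlog hlt : i < i' generalizing i i'
    · exact (this hi' hi hne.symm (by omega)).symm
    have : n (2 * i + 1) ≤ n (2 * i') := hn (by omega)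
    exact disjoint_left.2 fun j hj hj' => by simp only [Finset.mem_Ico] at hj hj'; omega
  simp only [blockUnion, card_biUnion hdisj, Nat.card_Ico]

lemma blockUnion_subset_range {n : ℕ → ℕ} (hn : Monotone n) (k : ℕ) :
    blockUnion n k ⊆ range (n (2 * k)) := by
  intro j hj
  obtain ⟨i, hi, -, hj⟩ := mem_blockUnion.1 hj
  exact Finset.mem_range.2 (hj.trans_le (hn (by omega)))

theorem stmt18_general (f : ℝ → ℝ → ℝ) (hdiff : ∀ t, Differentiable ℝ (f t))
    (x y : ℝ) (ω : ℕ → ℝ)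
    (δ : ℝ) (hδ1 : δ ≤ 1)
    (hclose : ∀ n : ℕ, |randIter f ω n x - randIter f ω n y| ≤ δ)
    (n : ℕ → ℕ) (hmono : StrictMono n)
    (σ₀ : ℝ) (hσ₀ : 1 < σ₀)
    (hexp : ∀ j z, (∃ k, j ∈ Set.Ico (n (2 * k)) (n (2 * k + 1))) →
      z ∈ Set.uIcc (randIter f ω j x) (randIter f ω j y) →
      σ₀ ≤ |deriv (f (ω j)) z|)
    (hone : ∀ j z, z ∈ Set.uIcc (randIter f ω j x) (randIter f ω j y) →
      1 ≤ |deriv (f (ω j)) z|) :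
    (∀ k : ℕ,
      |x - y| ≤ (σ₀ ^ (∑ i ∈ Finset.range k, (n (2 * i + 1) - n (2 * i))))⁻¹) ∧
    ((∀ N : ℕ, ∃ k : ℕ,
        N ≤ ∑ i ∈ Finset.range k, (n (2 * i + 1) - n (2 * i))) → x = y) := by
  have hbound : ∀ k, |x - y| ≤ (σ₀ ^ (∑ i ∈ range k, (n (2 * i + 1) - n (2 * i))))⁻¹ := by
    intro k
    set B := blockUnion n k
    have hexpand := prod_mul_abs_sub_le_abs_randIter_sub hdiff
      (ρ := fun j => if j ∈ B then σ₀ else 1) (fun j => by split_ifs <;> linarith)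
      (fun j z hz => by
        split_ifs with hj
        · obtain ⟨i, -, hi⟩ := mem_blockUnion.1 hj
          exact hexp j z ⟨i, hi⟩ hz
        · exact hone j z hz)
      (n (2 * k))
    rw [prod_ite_mem, Finset.inter_eq_right.2 (blockUnion_subset_range hmono.monotone k),
      prod_const, card_blockUnion hmono.monotone] at hexpand
    rw [← one_div, le_div_iff₀ (by positivity), mul_comm]
    linarith [hclose (n (2 * k))]
  refine ⟨hbound, fun hdiv => ?_⟩
  have hlim : Tendsto (fun N : ℕ => (σ₀ ^ N)⁻¹) atTop (𝓝 0) :=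
    tendsto_inv_atTop_zero.comp (tendsto_pow_atTop_atTop_of_one_lt hσ₀)
  have hle : |x - y| ≤ 0 := ge_of_tendsto' hlim fun N => by
    obtain ⟨k, hk⟩ := hdiv N
    exact (hbound k).trans (inv_anti₀ (by positivity) (pow_le_pow_right₀ hσ₀.le hk))
  exact sub_eq_zero.1 (abs_nonpos_iff.1 hle)

/-- Backward contraction estimate: if two random orbits stay within distance
`δ < δ₁` of each other (with `δ₁` an injectivity radius and `δ ≤ 1`, the
circle having total length `1`), every step derivative on the arc joining the
orbits is at least `1`, and along the blocks `[n_{2k-1}, n_{2k})` it is at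
least `σ₀ > 1`, then `dist(x,y) ≤ σ₀^{-Σ_k (n_{2k} - n_{2k-1})}`; in
particular if the block lengths have divergent sum then `x = y`. -/
theorem stmt18 (f : ℝ → ℝ → ℝ) (hdiff : ∀ t, Differentiable ℝ (f t))
    (δ₁ : ℝ) (hδ₁ : 0 < δ₁)
    (hinj : ∀ t x, Set.InjOn (f t) (Metric.ball x δ₁))
    (x y : ℝ) (ω : ℕ → ℝ)
    (δ : ℝ) (hδ0 : 0 < δ) (hδ : δ < δ₁) (hδ1 : δ ≤ 1)
    (hclose : ∀ n : ℕ, |randIter f ω n x - randIter f ω n y| ≤ δ)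
    (n : ℕ → ℕ) (hmono : StrictMono n)
    (σ₀ : ℝ) (hσ₀ : 1 < σ₀)
    (hexp : ∀ j z, (∃ k, j ∈ Set.Ico (n (2 * k)) (n (2 * k + 1))) →
      z ∈ Set.uIcc (randIter f ω j x) (randIter f ω j y) →
      σ₀ ≤ |deriv (f (ω j)) z|)
    (hone : ∀ j z, z ∈ Set.uIcc (randIter f ω j x) (randIter f ω j y) →
      1 ≤ |deriv (f (ω j)) z|) :
    (∀ k : ℕ,
      |x - y| ≤ (σ₀ ^ (∑ i ∈ Finset.range k, (n (2 * i + 1) - n (2 * i))))⁻¹) ∧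
    ((∀ N : ℕ, ∃ k : ℕ,
        N ≤ ∑ i ∈ Finset.range k, (n (2 * i + 1) - n (2 * i))) → x = y) :=
  stmt18_general f hdiff x y ω δ hδ1 hclose n hmono σ₀ hσ₀ hexp hone
end
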